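/- arXiv:2507.21457 — 5 statements merged into one kernel-verified Lean document; each statement's English description precedes it below -/
import Mathlib

section
/- For any real number ρ > 1 there exists a constant C(ρ) > 0 such that for all nonnegative reals x₁, …, xₙ, one has log^ρ(1 + Σᵢ xᵢ) ≤ Σᵢ log^ρ(1 + xᵢ) + C(ρ) · log^ρ(n). -/
/-!
Put `a i = log (1 + x i)` and `L = log (1 + ∑ x i)`, so that `exp L ≤ ∑ exp (a i)`, and let
`A = max a i`; then `L ≤ A + log n`. When `L` is at most a constant multiple of `log n`, there
is nothing to prove. Otherwise convexity gives `L^ρ ≤ A^ρ + ρ L^(ρ-1) (L - A)`, and either the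
correction is at most `(log n)^ρ`, or `L - A` is so large that comparing `exp L` with
`∑ exp (a i)` forces at least `1 + (L - A) / 2` of the `a i` to be `≥ L / 2`; their `ρ`-th
powers pay for the correction once `L` is large in terms of `ρ`.
-/

open Real Finset

theorem rpow_le_rpow_add_mul_rpow_sub_one_mul_sub {ρ u v : ℝ} (hρ : 1 ≤ ρ) (hu : 0 ≤ u)
    (hv : 0 < v) : v ^ ρ ≤ u ^ ρ + ρ * v ^ (ρ - 1) * (v - u) := by
  have hbernoulli := one_add_mul_self_le_rpow_one_add
    (by linarith [div_nonneg hu hv.le] : -1 ≤ u / v - 1) hρ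
  rw [add_sub_cancel, div_rpow hu hv.le, le_div_iff₀ (rpow_pos_of_pos hv ρ)] at hbernoulli
  have hvρ : v ^ ρ = v ^ (ρ - 1) * v := by rw [rpow_sub_one hv.ne', div_mul_cancel₀ _ hv.ne']
  calc v ^ ρ = (1 + ρ * (u / v - 1)) * v ^ ρ + ρ * v ^ (ρ - 1) * (v - u) := by
        rw [hvρ]; field_simp; ring
    _ ≤ u ^ ρ + ρ * v ^ (ρ - 1) * (v - u) := by gcongr

theorem add_card_sub_one_mul_le_sum {ι : Type*} [Fintype ι] {g : ι → ℝ}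
    (hg : ∀ i, 0 ≤ g i) {s : Finset ι} {i₀ : ι} (hi₀ : i₀ ∈ s) {b : ℝ} (hb : ∀ i ∈ s, b ≤ g i) :
    g i₀ + (#s - 1) * b ≤ ∑ i, g i := by
  classical
  have hcard : ((#(s.erase i₀) : ℕ) : ℝ) = #s - 1 := by
    rw [card_erase_of_mem hi₀, Nat.cast_pred (card_pos.2 ⟨i₀, hi₀⟩)]
  calc g i₀ + (#s - 1) * b ≤ g i₀ + ∑ i ∈ s.erase i₀, g i := by
        rw [← hcard]; gcongr
        simpa using card_nsmul_le_sum _ _ _ fun i hi => hb i (mem_of_mem_erase hi)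
    _ = ∑ i ∈ s, g i := by rw [add_comm, sum_erase_add _ _ hi₀]
    _ ≤ ∑ i, g i := sum_le_sum_of_subset_of_nonneg (subset_univ s) fun i _ _ => hg i

section

variable {ι : Type*} [Fintype ι] {a : ι → ℝ} {A : ℝ}

theorem sum_exp_le_card_filter_mul_add (hA : ∀ i, a i ≤ A) (β : ℝ) :
    ∑ i, exp (a i) ≤ #{i | β ≤ a i} * exp A + Fintype.card ι * exp β := by
  rw [← sum_filter_add_sum_filter_not univ (fun i => β ≤ a i)]
  gcongr
  · simpa using sum_le_card_nsmul _ _ _ fun i _ => exp_le_exp.2 (hA i)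
  · calc ∑ i with ¬β ≤ a i, exp (a i) ≤ #{i | ¬β ≤ a i} * exp β := by
          simpa using sum_le_card_nsmul _ _ _ fun i hi =>
            exp_le_exp.2 (not_le.1 (mem_filter.1 hi).2).le
      _ ≤ Fintype.card ι * exp β := by gcongr; exact_mod_cast card_filter_le _ _

theorem one_add_half_le_card_filter {β D : ℝ} (hA : ∀ i, a i ≤ A)
    (hsum : exp (A + D) ≤ ∑ i, exp (a i)) (hβ : Fintype.card ι * exp β ≤ exp A * D / 2) :
    1 + D / 2 ≤ #{i | β ≤ a i} := by
  have hexp : exp A * (1 + D) ≤ exp (A + D) := by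
    rw [exp_add]; gcongr; linarith [add_one_le_exp D]
  have := hexp.trans (hsum.trans (sum_exp_le_card_filter_mul_add hA β))
  nlinarith [exp_pos A]

theorem le_add_log_card_of_exp_le_sum_exp {L : ℝ} (hA : ∀ i, a i ≤ A)
    (hL : exp L ≤ ∑ i, exp (a i)) : L ≤ A + log (Fintype.card ι) := by
  have hcard : exp L ≤ Fintype.card ι * exp A := by
    simpa using hL.trans (sum_le_card_nsmul _ _ _ fun i _ => exp_le_exp.2 (hA i))
  have hpos : (0 : ℝ) < Fintype.card ι :=
    pos_of_mul_pos_left ((exp_pos L).trans_le hcard) (exp_pos A).le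
  rw [← log_exp L, ← log_exp A, ← log_mul (exp_pos A).ne' hpos.ne']
  exact log_le_log (exp_pos L) (by linarith)

theorem rpow_le_sum_rpow_add_log_card_rpow_of_large {ρ L : ℝ} (hρ : 1 ≤ ρ)
    (ha : ∀ i, 0 ≤ a i) {i₀ : ι} (hi₀ : ∀ i, a i ≤ a i₀) (hAL : a i₀ < L)
    (hL : exp L ≤ ∑ i, exp (a i)) (hn : 2 ≤ Fintype.card ι)
    (hℓ : 8 * log (Fintype.card ι) ≤ L) (hL₁ : ρ * 2 ^ (ρ + 1) ≤ L)
    (hL₂ : 2 * ρ * L ^ (ρ - 1) ≤ log 2 ^ ρ * exp (L / 4)) :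
    L ^ ρ ≤ ∑ i, a i ^ ρ + log (Fintype.card ι) ^ ρ := by
  set ℓ := log (Fintype.card ι)
  set D := L - a i₀ with hD
  have hLpos : 0 < L := (ha i₀).trans_lt hAL
  have hconv := rpow_le_rpow_add_mul_rpow_sub_one_mul_sub hρ (ha i₀) hLpos
  have hmax : a i₀ ^ ρ ≤ ∑ i, a i ^ ρ :=
    single_le_sum (fun i _ => rpow_nonneg (ha i) ρ) (mem_univ i₀)
  rcases le_or_gt (ρ * L ^ (ρ - 1) * D) (ℓ ^ ρ) with hsmall | hD_large
  · linarith
  have hρL : 0 < ρ * L ^ (ρ - 1) := by positivity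
  have hDe : 2 ≤ exp (L / 4) * D := by
    have : log 2 ^ ρ ≤ ℓ ^ ρ :=
      rpow_le_rpow (log_nonneg one_le_two) (log_le_log two_pos (by exact_mod_cast hn)) (by linarith)
    refine le_of_mul_le_mul_left ?_ hρL
    nlinarith [exp_pos (L / 4)]
  have hA_ge : L - ℓ ≤ a i₀ := by linarith [le_add_log_card_of_exp_le_sum_exp hi₀ hL]
  have hβ : Fintype.card ι * exp (L / 2) ≤ exp (a i₀) * D / 2 := by
    have hn0 : (0 : ℝ) < Fintype.card ι := by positivity
    calc Fintype.card ι * exp (L / 2) = exp (ℓ + L / 2) := by rw [exp_add, exp_log hn0]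
      _ ≤ exp (a i₀ - L / 4) := exp_le_exp.2 (by linarith)
      _ = exp (a i₀) * (2 / exp (L / 4)) / 2 := by rw [exp_sub]; ring
      _ ≤ exp (a i₀) * D / 2 := by gcongr; rwa [div_le_iff₀' (exp_pos _)]
  have hcard := one_add_half_le_card_filter hi₀ (by rwa [hD, add_sub_cancel]) hβ
  have hsum := add_card_sub_one_mul_le_sum (fun i => rpow_nonneg (ha i) ρ)
    (s := {i | L / 2 ≤ a i}) (b := (L / 2) ^ ρ) (mem_filter.2 ⟨mem_univ i₀, by linarith⟩)
    (fun i hi => rpow_le_rpow (by positivity) (mem_filter.1 hi).2 (by linarith))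
  have hmid : ρ * L ^ (ρ - 1) ≤ (L / 2) ^ ρ / 2 := by
    have : (L / 2) ^ ρ / 2 = L ^ (ρ - 1) * (L / 2 ^ (ρ + 1)) := by
      rw [div_rpow hLpos.le zero_le_two, rpow_add two_pos, rpow_one, rpow_sub_one hLpos.ne']
      field_simp
    rw [this, mul_comm ρ]
    gcongr
    rwa [le_div_iff₀ (by positivity)]
  have hℓρ : 0 ≤ ℓ ^ ρ := rpow_nonneg (by positivity) ρ
  nlinarith [mul_le_mul_of_nonneg_right hmid (sub_nonneg.2 hAL.le),
    mul_le_mul_of_nonneg_right hcard (rpow_nonneg (by positivity : 0 ≤ L / 2) ρ)]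

end

theorem exists_rpow_le_sum_rpow_add_mul_log_card_rpow {ρ : ℝ} (hρ : 1 ≤ ρ) :
    ∃ C > 0, ∀ {ι : Type*} [Fintype ι] (a : ι → ℝ) (L : ℝ), (∀ i, 0 ≤ a i) → 0 ≤ L →
      exp L ≤ ∑ i, exp (a i) → L ^ ρ ≤ ∑ i, a i ^ ρ + C * log (Fintype.card ι) ^ ρ := by
  obtain ⟨L₀, hL₀⟩ := ((Filter.eventually_ge_atTop (ρ * 2 ^ (ρ + 1))).and
    ((isLittleO_rpow_exp_pos_mul_atTop (ρ - 1) (b := 1 / 4) (by norm_num)).bound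
      (c := log 2 ^ ρ / (2 * ρ)) (by positivity))).exists_forall_of_atTop
  set K := max 8 (L₀ / log 2)
  refine ⟨K ^ ρ, by positivity, fun {ι} _ a L ha hL0 hL => ?_⟩
  have : Nonempty ι := by
    by_contra h
    simp [not_nonempty_iff.1 h] at hL
    exact (exp_pos L).not_ge hL
  obtain ⟨i₀, hi₀⟩ := Finite.exists_max a
  set ℓ := log (Fintype.card ι)
  have hℓρ : 0 ≤ ℓ ^ ρ := rpow_nonneg (log_natCast_nonneg _) ρ
  have hmax : a i₀ ^ ρ ≤ ∑ i, a i ^ ρ :=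
    single_le_sum (fun i _ => rpow_nonneg (ha i) ρ) (mem_univ i₀)
  have hKρ : 1 ≤ K ^ ρ := one_le_rpow (le_max_of_le_left (by norm_num)) (by linarith)
  rcases le_or_gt L (a i₀) with hLA | hAL
  · nlinarith [rpow_le_rpow hL0 hLA (by linarith : 0 ≤ ρ)]
  have hn : 2 ≤ Fintype.card ι := by
    have : 0 < ℓ := by linarith [le_add_log_card_of_exp_le_sum_exp hi₀ hL]
    exact_mod_cast (log_pos_iff (Nat.cast_nonneg _)).1 this
  have hℓ2 : log 2 ≤ ℓ := log_le_log two_pos (by exact_mod_cast hn)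
  rcases le_or_gt L (K * ℓ) with hsmall | hlarge
  · have := rpow_le_rpow hL0 hsmall (by linarith : 0 ≤ ρ)
    rw [mul_rpow (by positivity) (by positivity)] at this
    linarith [sum_nonneg fun i (_ : i ∈ univ) => rpow_nonneg (ha i) ρ]
  have hKℓ : 8 * ℓ ≤ L := by nlinarith [le_max_left 8 (L₀ / log 2)]
  have hL₀L : L₀ ≤ L := by
    have := mul_le_mul (le_max_right 8 (L₀ / log 2)) hℓ2 (log_nonneg one_le_two)
      (by positivity)
    rw [div_mul_cancel₀ _ (log_pos one_lt_two).ne'] at this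
    linarith
  obtain ⟨hL₁, hL₂⟩ := hL₀ L hL₀L
  have hL₂' : 2 * ρ * L ^ (ρ - 1) ≤ log 2 ^ ρ * exp (L / 4) := by
    rw [norm_of_nonneg (rpow_nonneg hL0 _), norm_of_nonneg (exp_pos _).le, div_mul_eq_mul_div,
      le_div_iff₀ (by positivity)] at hL₂
    rw [show L / 4 = 1 / 4 * L by ring]
    linarith
  nlinarith [rpow_le_sum_rpow_add_log_card_rpow_of_large hρ ha hi₀ hAL hL hn hKℓ hL₁ hL₂']

/-- Quasi-metric property of `x ↦ (log (1+x))^ρ` for `ρ > 1`. -/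
theorem quasi_metric_log_rpow (ρ : ℝ) (hρ : 1 < ρ) :
    ∃ C : ℝ, 0 < C ∧ ∀ (n : ℕ) (x : Fin n → ℝ), (∀ i, 0 ≤ x i) →
      Real.log (1 + ∑ i, x i) ^ ρ ≤
        (∑ i, Real.log (1 + x i) ^ ρ) + C * Real.log n ^ ρ := by
  obtain ⟨C, hC, hbound⟩ := exists_rpow_le_sum_rpow_add_mul_log_card_rpow hρ.le
  refine ⟨C, hC, fun n x hx => ?_⟩
  rcases n.eq_zero_or_pos with rfl | hn
  · simp [zero_rpow (by linarith : ρ ≠ 0)]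
  have hS : 0 ≤ ∑ i, x i := sum_nonneg fun i _ => hx i
  have hbound' := hbound (fun i => log (1 + x i)) (log (1 + ∑ i, x i))
    (fun i => log_nonneg (by linarith [hx i])) (log_nonneg (by linarith)) ?_
  · simpa using hbound'
  rw [exp_log (by linarith)]
  simp only [fun i => exp_log (by linarith [hx i] : 0 < 1 + x i), sum_add_distrib, sum_const,
    card_univ, Fintype.card_fin, nsmul_eq_mul, mul_one]
  gcongr
  exact_mod_cast hn
end

section
/- Let ρ > 1 and let x > y > 0 with 1 + x > 2y. Then log^ρ(1 + x − y) ≥ (1 − 2ρ · y / ((1+x) · log(1+x))) · log^ρ(1 + x). -/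
/-!
Write `L = log (1 + x)` and `M = log (1 + x - y)`. From `log t ≤ t - 1` and `2y < 1 + x`,
`L - M ≤ y / (1 + x - y) ≤ 2y / (1 + x)`. Bernoulli's inequality gives
`M ^ ρ = L ^ ρ (1 + (M / L - 1)) ^ ρ ≥ (1 - ρ (L - M) / L) L ^ ρ`, and the bound on `L - M` finishes.
-/

open Real

theorem one_sub_mul_sub_div_mul_rpow_le {a b ρ : ℝ} (ha : 0 < a) (hb : 0 ≤ b) (hρ : 1 ≤ ρ) :
    (1 - ρ * (a - b) / a) * a ^ ρ ≤ b ^ ρ := by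
  have hbern : 1 + ρ * (b / a - 1) ≤ (1 + (b / a - 1)) ^ ρ :=
    one_add_mul_self_le_rpow_one_add (by linarith [div_nonneg hb ha.le]) hρ
  have hcoeff : 1 - ρ * (a - b) / a = 1 + ρ * (b / a - 1) := by field_simp; ring
  calc (1 - ρ * (a - b) / a) * a ^ ρ
      ≤ (b / a) ^ ρ * a ^ ρ := by
        rw [hcoeff]
        exact mul_le_mul_of_nonneg_right (by simpa using hbern) (by positivity)
    _ = b ^ ρ := by rw [div_rpow hb ha.le, div_mul_cancel₀ _ (by positivity)]

theorem log_sub_log_sub_le_two_mul_div {a y : ℝ} (hy : 0 ≤ y) (h2y : 2 * y < a) :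
    log a - log (a - y) ≤ 2 * y / a := by
  have hay : 0 < a - y := by linarith
  calc log a - log (a - y) = log (a / (a - y)) := (log_div (by linarith) hay.ne').symm
    _ ≤ a / (a - y) - 1 := log_le_sub_one_of_pos (div_pos (by linarith) hay)
    _ = y / (a - y) := by field_simp; ring
    _ ≤ 2 * y / a := by
        rw [div_le_div_iff₀ hay (by linarith)]
        nlinarith

/-- Extract lemma: comparing `log^ρ(1+x−y)` with `log^ρ(1+x)`. -/
theorem extract_lemma (ρ x y : ℝ) (hρ : 1 < ρ) (hyx : y < x) (hy : 0 < y)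
    (h2y : 2 * y < 1 + x) :
    (1 - 2 * ρ * y / ((1 + x) * Real.log (1 + x))) * Real.log (1 + x) ^ ρ ≤
      Real.log (1 + x - y) ^ ρ := by
  have hL : 0 < log (1 + x) := log_pos (by linarith)
  have hM : 0 ≤ log (1 + x - y) := log_nonneg (by linarith)
  have hdiff := log_sub_log_sub_le_two_mul_div hy.le h2y
  calc (1 - 2 * ρ * y / ((1 + x) * log (1 + x))) * log (1 + x) ^ ρ
      = (1 - ρ * (2 * y / (1 + x)) / log (1 + x)) * log (1 + x) ^ ρ := by
        field_simp
    _ ≤ (1 - ρ * (log (1 + x) - log (1 + x - y)) / log (1 + x)) * log (1 + x) ^ ρ := by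
        gcongr
    _ ≤ log (1 + x - y) ^ ρ := one_sub_mul_sub_div_mul_rpow_le hL hM hρ.le
end

section
/- Let M be a block matrix [[A, B],[C, D]] with A invertible and ‖B‖, ‖C‖ ≤ 1, and let S = D − C A⁻¹ B. Then M is invertible if and only if S is invertible, and in that case ‖S⁻¹‖ ≤ ‖M⁻¹‖ < 4(1 + ‖A⁻¹‖)²(1 + ‖S⁻¹‖). -/
/-!
The block formula for `M⁻¹` (Mathlib's `Matrix.invOf_fromBlocks₁₁_eq`) shows that `M` is invertible
exactly when `S` is, with `S⁻¹` the lower right block of `M⁻¹`. Compressing to a block through the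
coordinate isometries `ℓ²(m₂) → ℓ²(m₁ ⊕ m₂)` does not increase the operator norm, which gives
`‖S⁻¹‖ ≤ ‖M⁻¹‖`. Conversely the norm of a block matrix is at most the sum of the norms of its blocks,
and with `a = ‖A⁻¹‖`, `s = ‖S⁻¹‖` and `‖B‖, ‖C‖ ≤ 1` the four blocks of `M⁻¹` have norms at most
`a + a s a`, `a s`, `s a` and `s`, so `‖M⁻¹‖ ≤ a + s (1 + a)² < 4 (1 + a)² (1 + s)`.
-/

/-- The `ℓ² → ℓ²` operator norm of a (possibly non-square) complex matrix. -/
noncomputable def matrixL2OpNorm {m n : Type*} [Fintype m] [Fintype n]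
    [DecidableEq m] [DecidableEq n] (M : Matrix m n ℂ) : ℝ :=
  ‖LinearMap.toContinuousLinearMap (Matrix.toEuclideanLin M)‖

open scoped Matrix.Norms.L2Operator

namespace Matrix

section Schur

variable {m n α : Type*} [Fintype m] [Fintype n] [DecidableEq m] [DecidableEq n] [CommRing α]
  {A : Matrix m m α} {B : Matrix m n α} {C : Matrix n m α} {D : Matrix n n α}

theorem isUnit_fromBlocks_iff_of_isUnit₁₁ (hA : IsUnit A) :
    IsUnit (fromBlocks A B C D) ↔ IsUnit (D - C * A⁻¹ * B) := by
  let := hA.invertible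
  rw [← invOf_eq_nonsing_inv]
  exact isUnit_fromBlocks_iff_of_invertible₁₁

theorem inv_fromBlocks_of_isUnit₁₁ (hA : IsUnit A) (hS : IsUnit (D - C * A⁻¹ * B)) :
    (fromBlocks A B C D)⁻¹ =
      fromBlocks (A⁻¹ + A⁻¹ * B * (D - C * A⁻¹ * B)⁻¹ * C * A⁻¹)
        (-(A⁻¹ * B * (D - C * A⁻¹ * B)⁻¹)) (-((D - C * A⁻¹ * B)⁻¹ * C * A⁻¹))
        (D - C * A⁻¹ * B)⁻¹ := by
  let := hA.invertible
  rw [← invOf_eq_nonsing_inv] at hS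
  let := hS.invertible
  let := fromBlocks₁₁Invertible A B C D
  simp only [← invOf_eq_nonsing_inv, invOf_fromBlocks₁₁_eq]

end Schur

section BlockInclusion

variable (m n α : Type*) [DecidableEq m] [Zero α] [One α]

def blockInl : Matrix (m ⊕ n) m α := fromRows 1 0

def blockInr : Matrix (n ⊕ m) m α := fromRows 0 1

end BlockInclusion

section L2OpNorm

variable {𝕜 : Type*} [RCLike 𝕜]

theorem l2_opNorm_mul_mul_le {m n p q : Type*} [Fintype m] [Fintype n] [Fintype p] [Fintype q]
    [DecidableEq n] [DecidableEq p] [DecidableEq q]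
    (X : Matrix m n 𝕜) (Y : Matrix n p 𝕜) (Z : Matrix p q 𝕜) :
    ‖X * Y * Z‖ ≤ ‖X‖ * ‖Y‖ * ‖Z‖ :=
  (l2_opNorm_mul _ _).trans <| by gcongr; exact l2_opNorm_mul _ _

theorem l2_opNorm_mul_mul_le_of_le_one {m n p q : Type*} [Fintype m] [Fintype n] [Fintype p]
    [Fintype q] [DecidableEq n] [DecidableEq p] [DecidableEq q]
    {E : Matrix m n 𝕜} {F : Matrix p q 𝕜} (hE : ‖E‖ ≤ 1) (hF : ‖F‖ ≤ 1) (X : Matrix n p 𝕜) :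
    ‖E * X * F‖ ≤ ‖X‖ :=
  calc ‖E * X * F‖ ≤ ‖E‖ * ‖X‖ * ‖F‖ := l2_opNorm_mul_mul_le E X F
    _ ≤ 1 * ‖X‖ * 1 := by gcongr
    _ = ‖X‖ := by ring

theorem l2_opNorm_mul_mul_le_mul_of_le_one {m n p q : Type*} [Fintype m] [Fintype n]
    [Fintype p] [Fintype q] [DecidableEq n] [DecidableEq p] [DecidableEq q]
    (X : Matrix m n 𝕜) {E : Matrix n p 𝕜} (hE : ‖E‖ ≤ 1) (Y : Matrix p q 𝕜) :
    ‖X * E * Y‖ ≤ ‖X‖ * ‖Y‖ :=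
  calc ‖X * E * Y‖ ≤ ‖X‖ * ‖E‖ * ‖Y‖ := l2_opNorm_mul_mul_le X E Y
    _ ≤ ‖X‖ * 1 * ‖Y‖ := by gcongr
    _ = ‖X‖ * ‖Y‖ := by ring

theorem l2_opNorm_le_one_of_conjTranspose_mul_self_eq_one {m n : Type*} [Fintype m] [Fintype n]
    [DecidableEq n] {J : Matrix m n 𝕜} (hJ : Jᴴ * J = 1) : ‖J‖ ≤ 1 := by
  have hone : ‖(1 : Matrix n n 𝕜)‖ ≤ 1 := by
    -- `‖1‖ = ‖1‖ ^ 2`, and `‖1‖ = 0` when `n` is empty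
    have h := l2_opNorm_conjTranspose_mul_self (1 : Matrix n n 𝕜)
    rw [conjTranspose_one, one_mul] at h
    nlinarith [norm_nonneg (1 : Matrix n n 𝕜)]
  have hJJ := l2_opNorm_conjTranspose_mul_self J
  rw [hJ] at hJJ
  nlinarith [norm_nonneg J]

theorem l2_opNorm_blockInl_le_one (m n : Type*) [Fintype m] [Fintype n] [DecidableEq m] :
    ‖blockInl m n 𝕜‖ ≤ 1 :=
  l2_opNorm_le_one_of_conjTranspose_mul_self_eq_one <| by
    simp [blockInl, conjTranspose_fromRows_eq_fromCols_conjTranspose, fromCols_mul_fromRows]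

theorem l2_opNorm_blockInr_le_one (m n : Type*) [Fintype m] [Fintype n] [DecidableEq m] :
    ‖blockInr m n 𝕜‖ ≤ 1 :=
  l2_opNorm_le_one_of_conjTranspose_mul_self_eq_one <| by
    simp [blockInr, conjTranspose_fromRows_eq_fromCols_conjTranspose, fromCols_mul_fromRows]

theorem conjTranspose_blockInr_mul_mul_blockInr {m₁ m₂ n₁ n₂ : Type*} [Fintype m₁] [Fintype m₂]
    [Fintype n₁] [Fintype n₂] [DecidableEq m₂] [DecidableEq n₂] (M : Matrix (m₁ ⊕ m₂) (n₁ ⊕ n₂) 𝕜) :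
    (blockInr m₂ m₁ 𝕜)ᴴ * M * blockInr n₂ n₁ 𝕜 = M.toBlocks₂₂ := by
  conv_lhs => rw [← fromBlocks_toBlocks M]
  simp [blockInr, conjTranspose_fromRows_eq_fromCols_conjTranspose, fromCols_mul_fromBlocks,
    fromCols_mul_fromRows]

theorem l2_opNorm_toBlocks₂₂_le {m₁ m₂ n₁ n₂ : Type*} [Fintype m₁] [Fintype m₂] [Fintype n₁]
    [Fintype n₂] [DecidableEq m₁] [DecidableEq m₂] [DecidableEq n₁] [DecidableEq n₂]
    (M : Matrix (m₁ ⊕ m₂) (n₁ ⊕ n₂) 𝕜) : ‖M.toBlocks₂₂‖ ≤ ‖M‖ := by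
  rw [← conjTranspose_blockInr_mul_mul_blockInr]
  exact l2_opNorm_mul_mul_le_of_le_one
    (by rw [l2_opNorm_conjTranspose]; exact l2_opNorm_blockInr_le_one m₂ m₁)
    (l2_opNorm_blockInr_le_one n₂ n₁) M

section Blocks

variable {m₁ m₂ n₁ n₂ : Type*} [Fintype m₁] [Fintype m₂] [Fintype n₁] [Fintype n₂]
  [DecidableEq m₁] [DecidableEq m₂] [DecidableEq n₁] [DecidableEq n₂]

theorem fromBlocks_eq_sum_blockInl_blockInr (P : Matrix m₁ n₁ 𝕜) (Q : Matrix m₁ n₂ 𝕜)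
    (R : Matrix m₂ n₁ 𝕜) (W : Matrix m₂ n₂ 𝕜) :
    fromBlocks P Q R W =
      blockInl m₁ m₂ 𝕜 * P * (blockInl n₁ n₂ 𝕜)ᴴ + blockInl m₁ m₂ 𝕜 * Q * (blockInr n₂ n₁ 𝕜)ᴴ +
        blockInr m₂ m₁ 𝕜 * R * (blockInl n₁ n₂ 𝕜)ᴴ +
        blockInr m₂ m₁ 𝕜 * W * (blockInr n₂ n₁ 𝕜)ᴴ := by
  ext (i | i) (j | j) <;>
    simp [blockInl, blockInr, conjTranspose_fromRows_eq_fromCols_conjTranspose]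

theorem l2_opNorm_fromBlocks_le (P : Matrix m₁ n₁ 𝕜) (Q : Matrix m₁ n₂ 𝕜)
    (R : Matrix m₂ n₁ 𝕜) (W : Matrix m₂ n₂ 𝕜) :
    ‖fromBlocks P Q R W‖ ≤ ‖P‖ + ‖Q‖ + ‖R‖ + ‖W‖ := by
  have hl₁ : ‖blockInl m₁ m₂ 𝕜‖ ≤ 1 := l2_opNorm_blockInl_le_one m₁ m₂
  have hr₁ : ‖blockInr m₂ m₁ 𝕜‖ ≤ 1 := l2_opNorm_blockInr_le_one m₂ m₁
  have hl₂ : ‖(blockInl n₁ n₂ 𝕜)ᴴ‖ ≤ 1 :=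
    (l2_opNorm_conjTranspose _).trans_le (l2_opNorm_blockInl_le_one n₁ n₂)
  have hr₂ : ‖(blockInr n₂ n₁ 𝕜)ᴴ‖ ≤ 1 :=
    (l2_opNorm_conjTranspose _).trans_le (l2_opNorm_blockInr_le_one n₂ n₁)
  rw [fromBlocks_eq_sum_blockInl_blockInr]
  refine (norm_add_le _ _).trans <| (add_le_add (norm_add₃_le ..) le_rfl).trans ?_
  gcongr <;> exact l2_opNorm_mul_mul_le_of_le_one ‹_› ‹_› _

end Blocks

section SchurComplement

variable {m n : Type*} [Fintype m] [Fintype n] [DecidableEq m] [DecidableEq n]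
  {A : Matrix m m 𝕜} {B : Matrix m n 𝕜} {C : Matrix n m 𝕜} {D : Matrix n n 𝕜}

theorem l2_opNorm_inv_schur_le_inv_fromBlocks (hA : IsUnit A) (hS : IsUnit (D - C * A⁻¹ * B)) :
    ‖(D - C * A⁻¹ * B)⁻¹‖ ≤ ‖(fromBlocks A B C D)⁻¹‖ := by
  simpa [inv_fromBlocks_of_isUnit₁₁ hA hS] using l2_opNorm_toBlocks₂₂_le (fromBlocks A B C D)⁻¹

theorem l2_opNorm_inv_fromBlocks_le (hA : IsUnit A) (hS : IsUnit (D - C * A⁻¹ * B))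
    (hB : ‖B‖ ≤ 1) (hC : ‖C‖ ≤ 1) :
    ‖(fromBlocks A B C D)⁻¹‖ ≤ ‖A⁻¹‖ + ‖(D - C * A⁻¹ * B)⁻¹‖ * (1 + ‖A⁻¹‖) ^ 2 := by
  set a := ‖A⁻¹‖
  set s := ‖(D - C * A⁻¹ * B)⁻¹‖
  have h₁₂ : ‖A⁻¹ * B * (D - C * A⁻¹ * B)⁻¹‖ ≤ a * s :=
    l2_opNorm_mul_mul_le_mul_of_le_one _ hB _
  have h₂₁ : ‖(D - C * A⁻¹ * B)⁻¹ * C * A⁻¹‖ ≤ s * a :=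
    l2_opNorm_mul_mul_le_mul_of_le_one _ hC _
  have h₁₁ : ‖A⁻¹ + A⁻¹ * B * (D - C * A⁻¹ * B)⁻¹ * C * A⁻¹‖ ≤ a + a * s * a :=
    calc _ ≤ a + ‖A⁻¹ * B * (D - C * A⁻¹ * B)⁻¹‖ * a := by
          grw [norm_add_le, l2_opNorm_mul_mul_le_mul_of_le_one _ hC]
      _ ≤ a + a * s * a := by gcongr
  calc ‖(fromBlocks A B C D)⁻¹‖ ≤ (a + a * s * a) + a * s + s * a + s := by
        rw [inv_fromBlocks_of_isUnit₁₁ hA hS]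
        grw [l2_opNorm_fromBlocks_le, h₁₁, norm_neg, h₁₂, norm_neg, h₂₁]
    _ = a + s * (1 + a) ^ 2 := by ring

end SchurComplement

end L2OpNorm

end Matrix

theorem matrixL2OpNorm_eq_l2_opNorm {m n : Type*} [Fintype m] [Fintype n] [DecidableEq m]
    [DecidableEq n] (M : Matrix m n ℂ) : matrixL2OpNorm M = ‖M‖ :=
  rfl

/-- Schur complement lemma: invertibility and norm estimates for a block matrix. -/
theorem schur_complement_inverse (m₁ m₂ : Type*) [Fintype m₁] [Fintype m₂]
    [DecidableEq m₁] [DecidableEq m₂]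
    (A : Matrix m₁ m₁ ℂ) (B : Matrix m₁ m₂ ℂ)
    (C : Matrix m₂ m₁ ℂ) (D : Matrix m₂ m₂ ℂ) (hA : IsUnit A)
    (hB : matrixL2OpNorm B ≤ 1) (hC : matrixL2OpNorm C ≤ 1) :
    (IsUnit (Matrix.fromBlocks A B C D) ↔ IsUnit (D - C * A⁻¹ * B)) ∧
      (IsUnit (D - C * A⁻¹ * B) →
        matrixL2OpNorm (D - C * A⁻¹ * B)⁻¹ ≤ matrixL2OpNorm (Matrix.fromBlocks A B C D)⁻¹ ∧
        matrixL2OpNorm (Matrix.fromBlocks A B C D)⁻¹ <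
          4 * (1 + matrixL2OpNorm A⁻¹) ^ 2 * (1 + matrixL2OpNorm (D - C * A⁻¹ * B)⁻¹)) := by
  simp only [matrixL2OpNorm_eq_l2_opNorm] at hB hC ⊢
  refine ⟨Matrix.isUnit_fromBlocks_iff_of_isUnit₁₁ hA, fun hS ↦
    ⟨Matrix.l2_opNorm_inv_schur_le_inv_fromBlocks hA hS, ?_⟩⟩
  calc ‖(Matrix.fromBlocks A B C D)⁻¹‖
      ≤ ‖A⁻¹‖ + ‖(D - C * A⁻¹ * B)⁻¹‖ * (1 + ‖A⁻¹‖) ^ 2 :=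
        Matrix.l2_opNorm_inv_fromBlocks_le hA hS hB hC
    _ < 4 * (1 + ‖A⁻¹‖) ^ 2 * (1 + ‖(D - C * A⁻¹ * B)⁻¹‖) := by
        nlinarith [norm_nonneg A⁻¹, norm_nonneg (D - C * A⁻¹ * B)⁻¹]
end

section
/- Let Λ ⊂ ℤ^d be finite and A, B complex matrices indexed by Λ with sup_{x∈Λ} Σ_{y∈Λ} |A(x,y)| ≤ M and sup_{x∈Λ} Σ_{y∈Λ} |B(x,y)| ≤ ε. Then |det(A + B) − det A| ≤ ε · (#Λ)² · (M + ε)^{#Λ − 1}. -/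
/-!
Replace the rows of `A` by those of `A + B` one at a time. By multilinearity of the determinant in
the rows, each replacement changes the determinant by the determinant of a matrix whose new row is
a row of `B` (row sum at most `ε`) and whose other rows are rows of `A` or `A + B` (row sums at
most `M + ε`). Expanding the determinant over permutations bounds its norm by the product of the
row sums, so each of the `#Λ` steps costs at most `ε (M + ε) ^ (#Λ - 1)`; this even gives the
bound with `#Λ` in place of `#Λ ^ 2`.
-/

open Finset Equiv

namespace Matrix

section piecewiseRows

variable {m n α : Type*} [DecidableEq m]

def piecewiseRows (s : Finset m) (B A : Matrix m n α) : Matrix m n α :=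
  of fun i => if i ∈ s then B i else A i

@[simp]
theorem piecewiseRows_apply (s : Finset m) (B A : Matrix m n α) (i : m) :
    piecewiseRows s B A i = if i ∈ s then B i else A i :=
  rfl

theorem piecewiseRows_insert (s : Finset m) (B A : Matrix m n α) (a : m) :
    piecewiseRows (insert a s) B A = (piecewiseRows s B A).updateRow a (B a) := by
  ext i : 1
  by_cases hi : i = a <;> simp [hi]

theorem piecewiseRows_empty (B A : Matrix m n α) : piecewiseRows ∅ B A = A := by
  ext i : 1
  simp

theorem piecewiseRows_univ [Fintype m] (B A : Matrix m n α) : piecewiseRows univ B A = B := by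
  ext i : 1
  simp

end piecewiseRows

variable {n R : Type*} [Fintype n] [DecidableEq n]

theorem norm_det_le_prod_sum_norm [NormedCommRing R] [NormOneClass R] (D : Matrix n n R) :
    ‖D.det‖ ≤ ∏ i, ∑ j, ‖D i j‖ := by
  let g : (n → n) → ℝ := fun f => ∏ i, ‖D i (f i)‖
  rw [← det_transpose, det_apply]
  calc ‖∑ σ : Perm n, Perm.sign σ • ∏ i, Dᵀ (σ i) i‖
      ≤ ∑ σ : Perm n, g σ := by
        refine (norm_sum_le _ _).trans (sum_le_sum fun σ _ => ?_)
        rcases Int.units_eq_one_or (Perm.sign σ) with h | h <;>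
          simpa [h] using Finset.norm_prod_le _ _
    _ = ∑ f ∈ univ.map ⟨_, DFunLike.coe_injective⟩, g f := by rw [sum_map]; rfl
    _ ≤ ∑ f, g f := sum_le_univ_sum_of_nonneg fun f => prod_nonneg fun i _ => norm_nonneg _
    _ = ∏ i, ∑ j, ‖D i j‖ := by rw [prod_univ_sum, Fintype.piFinset_univ]

theorem norm_det_updateRow_le [NormedCommRing R] [NormOneClass R] {C : Matrix n n R} {K ε : ℝ}
    (hC : ∀ i, ∑ j, ‖C i j‖ ≤ K) (a : n) {v : n → R} (hv : ∑ j, ‖v j‖ ≤ ε) :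
    ‖(C.updateRow a v).det‖ ≤ ε * K ^ (Fintype.card n - 1) := by
  have hrow : ∀ i ∈ univ.erase a, ∑ j, ‖C.updateRow a v i j‖ ≤ K := fun i hi => by
    rw [updateRow_ne (ne_of_mem_erase hi)]; exact hC i
  calc ‖(C.updateRow a v).det‖
      ≤ (∑ j, ‖v j‖) * ∏ i ∈ univ.erase a, ∑ j, ‖C.updateRow a v i j‖ := by
        refine (norm_det_le_prod_sum_norm _).trans_eq ?_
        rw [← mul_prod_erase univ _ (mem_univ a), updateRow_self]
    _ ≤ ε * K ^ (Fintype.card n - 1) := by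
        rw [← card_univ, ← card_erase_of_mem (mem_univ a), ← prod_const]
        gcongr with i hi
        · exact (sum_nonneg fun j _ => norm_nonneg _).trans hv
        · exact hrow i hi

theorem det_piecewiseRows_insert_sub [CommRing R] (A B : Matrix n n R) {s : Finset n} {a : n}
    (ha : a ∉ s) :
    (piecewiseRows (insert a s) B A).det - (piecewiseRows s B A).det =
      ((piecewiseRows s B A).updateRow a (B a - A a)).det := by
  have hrow : piecewiseRows s B A a = A a := by simp [ha]
  nth_rw 1 [piecewiseRows_insert, ← add_sub_cancel (A a) (B a)]
  rw [det_updateRow_add, ← hrow, updateRow_eq_self, add_sub_cancel_left, hrow]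

theorem sum_norm_piecewiseRows_add_le [NormedCommRing R] {A B : Matrix n n R} {M ε : ℝ}
    (hA : ∀ i, ∑ j, ‖A i j‖ ≤ M) (hB : ∀ i, ∑ j, ‖B i j‖ ≤ ε) (s : Finset n) (i : n) :
    ∑ j, ‖piecewiseRows s (A + B) A i j‖ ≤ M + ε := by
  by_cases hi : i ∈ s
  · calc ∑ j, ‖piecewiseRows s (A + B) A i j‖ = ∑ j, ‖A i j + B i j‖ := by simp [hi]
      _ ≤ ∑ j, (‖A i j‖ + ‖B i j‖) := sum_le_sum fun j _ => norm_add_le _ _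
      _ ≤ M + ε := sum_add_distrib.trans_le (add_le_add (hA i) (hB i))
  · simp only [piecewiseRows_apply, hi, if_false]
    linarith [hA i, hB i, sum_nonneg fun j (_ : j ∈ univ) => norm_nonneg (B i j)]

theorem norm_det_piecewiseRows_add_sub_le [NormedCommRing R] [NormOneClass R]
    {A B : Matrix n n R} {M ε : ℝ} (hA : ∀ i, ∑ j, ‖A i j‖ ≤ M) (hB : ∀ i, ∑ j, ‖B i j‖ ≤ ε)
    (s : Finset n) :
    ‖(piecewiseRows s (A + B) A).det - A.det‖ ≤ #s * (ε * (M + ε) ^ (Fintype.card n - 1)) := by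
  induction s using Finset.induction_on with
  | empty => simp [piecewiseRows_empty]
  | insert a s ha ih =>
    have hstep := norm_det_updateRow_le (sum_norm_piecewiseRows_add_le hA hB s) a
      (v := (A + B) a - A a) (by simpa using hB a)
    calc ‖(piecewiseRows (insert a s) (A + B) A).det - A.det‖
        ≤ ‖(piecewiseRows (insert a s) (A + B) A).det - (piecewiseRows s (A + B) A).det‖
          + ‖(piecewiseRows s (A + B) A).det - A.det‖ := norm_sub_le_norm_sub_add_norm_sub _ _ _
      _ ≤ #(insert a s) * (ε * (M + ε) ^ (Fintype.card n - 1)) := by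
        rw [det_piecewiseRows_insert_sub _ _ ha, card_insert_of_notMem ha, Nat.cast_succ]
        linarith

end Matrix

/-- Perturbation bound for determinants. -/
theorem det_perturbation_bound (d : ℕ) (Λ : Finset (Fin d → ℤ))
    (A B : Matrix Λ Λ ℂ) (M ε : ℝ)
    (hA : ∀ x : Λ, ∑ y : Λ, ‖A x y‖ ≤ M)
    (hB : ∀ x : Λ, ∑ y : Λ, ‖B x y‖ ≤ ε) :
    ‖(A + B).det - A.det‖ ≤
      ε * (Λ.card : ℝ) ^ 2 * (M + ε) ^ (Λ.card - 1) := by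
  have h := Matrix.norm_det_piecewiseRows_add_sub_le hA hB univ
  rw [Matrix.piecewiseRows_univ, card_univ, Fintype.card_coe] at h
  set X := ε * (M + ε) ^ (Λ.card - 1)
  rcases Nat.eq_zero_or_pos Λ.card with hn | hn
  · simpa [hn] using h
  have hX : 0 ≤ X := nonneg_of_mul_nonneg_right ((norm_nonneg _).trans h) (by exact_mod_cast hn)
  calc ‖(A + B).det - A.det‖ ≤ Λ.card * X := h
    _ ≤ (Λ.card : ℝ) ^ 2 * X := by gcongr; exact_mod_cast Nat.le_self_pow two_ne_zero _
    _ = ε * (Λ.card : ℝ) ^ 2 * (M + ε) ^ (Λ.card - 1) := by ring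
end

section
/- Let α > 0, ρ > 1, and let W: ℤ^d × ℤ^d → ℂ satisfy |W(x,y)| ≤ e^{−α log^ρ(1+‖x−y‖)}. Then for any finite Λ ⊂ ℤ^d, any i ≥ 2, and any x, y ∈ Λ, the i-th matrix power satisfies |W_Λ^i(x,y)| ≤ D(α/4)^{i−1} · e^{−(3/4)α log^ρ(1+‖x−y‖) + (3/4)α C(ρ) log^ρ i}, where D(α/4) = Σ_{k∈ℤ^d} e^{−(α/4) log^ρ(1+‖k‖)} and C(ρ) is the quasi-metric constant. -/
/-!
Expand `W_Λ ^ i x y` as a sum over lattice paths `x = p₀, p₁, …, pᵢ = y` in `Λ` and bound every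
entry by the kernel `e^{-α ℓ(a - b)}`, `ℓ(v) = log^ρ (1 + ‖v‖)`. In the weight of a path keep a
quarter of each factor and bound the remaining `e^{-(3/4) α Σ ℓ(hop)}` uniformly: by the triangle
inequality and the quasi-metric inequality, `Σ ℓ(hop) ≥ ℓ(x - y) - C(ρ) log^ρ i`. What is left is
the `i`-th power of the kernel with rate `α / 4`, whose entries are `≤ 1` and whose row sums are
`≤ D(α / 4)`, so its entries are `≤ D(α / 4) ^ (i - 1)`.
-/

open Finset Real

theorem norm_sub_le_sum_norm_sub_succ {E : Type*} [SeminormedAddCommGroup E] :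
    ∀ {n : ℕ} (p : Fin (n + 1) → E),
      ‖p 0 - p (Fin.last n)‖ ≤ ∑ j : Fin n, ‖p j.castSucc - p j.succ‖
  | 0, p => by simp
  | n + 1, p => by
    rw [Fin.sum_univ_succ]
    have := norm_sub_le_sum_norm_sub_succ fun j => p j.succ
    simp only [Fin.succ_zero_eq_one, Fin.succ_last] at this
    exact (norm_sub_le_norm_sub_add_norm_sub _ (p 1) _).trans (by simpa using this)

theorem summable_fin_pi_prod_of_nonneg {α : Type*} {f : α → ℝ} (hf₀ : 0 ≤ f) (hf : Summable f) :
    ∀ n : ℕ, Summable fun k : Fin n → α => ∏ j, f (k j)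
  | 0 => .of_finite
  | n + 1 => by
    have := hf.mul_of_nonneg (summable_fin_pi_prod_of_nonneg hf₀ hf n) hf₀
      fun k => prod_nonneg fun j _ => hf₀ _
    refine (Fin.consEquiv fun _ => α).summable_iff.mp (this.congr fun k => ?_)
    simp [Fin.consEquiv, Fin.prod_univ_succ]

theorem exists_mul_sub_mul_rpow_le {a c ρ : ℝ} (ha : 0 ≤ a) (hc : 0 < c) (hρ : 1 < ρ) :
    ∃ M, ∀ u, 0 ≤ u → a * u - c * u ^ ρ ≤ M := by
  set B := (a / c) ^ (ρ - 1)⁻¹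
  have hB : 0 ≤ B := by positivity
  refine ⟨a * B, fun u hu => ?_⟩
  rcases le_or_gt u B with huB | hBu
  · nlinarith [rpow_nonneg hu ρ]
  · have hBpow : B ^ (ρ - 1) = a / c := by
      rw [← rpow_mul (by positivity), inv_mul_cancel₀ (by linarith), rpow_one]
    have hu_pow : a / c ≤ u ^ (ρ - 1) := hBpow ▸ rpow_le_rpow hB hBu.le (by linarith)
    have : a * u ≤ c * u ^ ρ := by
      rw [← sub_add_cancel ρ 1, rpow_add_one (hB.trans_lt hBu).ne', ← mul_assoc]
      gcongr
      rwa [div_le_iff₀' hc] at hu_pow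
    nlinarith

namespace Matrix

variable {ι : Type*} [Fintype ι] [DecidableEq ι]

def pathProd {R : Type*} [CommMonoid R] (M : Matrix ι ι R) {n : ℕ} (p : Fin (n + 1) → ι) : R :=
  ∏ j : Fin n, M (p j.castSucc) (p j.succ)

theorem pow_succ_apply_eq_sum_pathProd {R : Type*} [CommSemiring R] (M : Matrix ι ι R) (n : ℕ)
    (x y : ι) : (M ^ (n + 1)) x y = ∑ z : Fin n → ι, M.pathProd (Fin.cons x (Fin.snoc z y)) := by
  induction n generalizing x with
  | zero => simp [pathProd, Fin.snoc_zero]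
  | succ n ih =>
    rw [pow_succ', mul_apply, ← Fintype.sum_equiv (Fin.consEquiv fun _ => ι) _ _ (fun _ => rfl),
      Fintype.sum_prod_type]
    refine Fintype.sum_congr _ _ fun a => ?_
    rw [ih, mul_sum]
    refine Fintype.sum_congr _ _ fun z => ?_
    simp [pathProd, Fin.prod_univ_succ, Fin.consEquiv, ← Fin.cons_snoc_eq_snoc_cons]

theorem norm_pow_succ_apply_le {R : Type*} [SeminormedRing R] {M : Matrix ι ι R}
    {N : Matrix ι ι ℝ} (hMN : ∀ a b, ‖M a b‖ ≤ N a b) (n : ℕ) (x y : ι) :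
    ‖(M ^ (n + 1)) x y‖ ≤ (N ^ (n + 1)) x y := by
  induction n generalizing x with
  | zero => simpa using hMN x y
  | succ n ih =>
    rw [pow_succ', mul_apply, pow_succ' N, mul_apply]
    refine (norm_sum_le _ _).trans (sum_le_sum fun a _ => ?_)
    exact (norm_mul_le _ _).trans
      (mul_le_mul (hMN x a) (ih a) (norm_nonneg _) ((norm_nonneg _).trans (hMN x a)))

theorem pow_succ_apply_le_pow {G : Matrix ι ι ℝ} {D : ℝ} (hG₀ : ∀ a b, 0 ≤ G a b)
    (hG₁ : ∀ a b, G a b ≤ 1) (hrow : ∀ a, ∑ b, G a b ≤ D) (n : ℕ) (x y : ι) :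
    (G ^ (n + 1)) x y ≤ D ^ n := by
  induction n generalizing x with
  | zero => simpa using hG₁ x y
  | succ n ih =>
    have hD : 0 ≤ D := (sum_nonneg fun b _ => hG₀ x b).trans (hrow x)
    calc (G ^ (n + 2)) x y = ∑ a, G x a * (G ^ (n + 1)) a y := by rw [pow_succ', mul_apply]
      _ ≤ ∑ a, G x a * D ^ n := sum_le_sum fun a _ => mul_le_mul_of_nonneg_left (ih a) (hG₀ x a)
      _ = (∑ a, G x a) * D ^ n := (sum_mul _ _ _).symm
      _ ≤ D * D ^ n := mul_le_mul_of_nonneg_right (hrow x) (pow_nonneg hD n)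
      _ = D ^ (n + 1) := (pow_succ' D n).symm

end Matrix

section DecayKernel

variable {E : Type*} [SeminormedAddCommGroup E]

theorem log_one_add_norm_sub_rpow_le_sum {ρ Cρ : ℝ} (hρ : 0 ≤ ρ)
    (hC : ∀ (n : ℕ) (t : Fin n → ℝ), (∀ j, 0 ≤ t j) →
      Real.log (1 + ∑ j, t j) ^ ρ ≤ (∑ j, Real.log (1 + t j) ^ ρ) + Cρ * Real.log n ^ ρ)
    {n : ℕ} (p : Fin (n + 1) → E) :
    log (1 + ‖p 0 - p (Fin.last n)‖) ^ ρ ≤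
      ∑ j : Fin n, log (1 + ‖p j.castSucc - p j.succ‖) ^ ρ + Cρ * log n ^ ρ := by
  refine le_trans ?_ (hC n _ fun j => norm_nonneg _)
  have hsum := norm_sub_le_sum_norm_sub_succ p
  gcongr
  exact log_nonneg (le_add_of_nonneg_right (norm_nonneg _))

noncomputable def decayKernel (c ρ : ℝ) (Λ : Finset E) : Matrix Λ Λ ℝ :=
  Matrix.of fun a b => exp (-c * log (1 + ‖(a : E) - b‖) ^ ρ)

theorem decayKernel_nonneg (c ρ : ℝ) (Λ : Finset E) (a b : Λ) : 0 ≤ decayKernel c ρ Λ a b :=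
  (exp_pos _).le

theorem decayKernel_le_one {c : ℝ} (hc : 0 ≤ c) (ρ : ℝ) (Λ : Finset E) (a b : Λ) :
    decayKernel c ρ Λ a b ≤ 1 := by
  have : 0 ≤ log (1 + ‖(a : E) - b‖) ^ ρ :=
    rpow_nonneg (log_nonneg (le_add_of_nonneg_right (norm_nonneg _))) ρ
  exact exp_le_one_iff.mpr (by nlinarith)

theorem sum_decayKernel_le_tsum {c ρ : ℝ} (Λ : Finset E)
    (hs : Summable fun k : E => exp (-c * log (1 + ‖k‖) ^ ρ)) (a : Λ) :
    ∑ b, decayKernel c ρ Λ a b ≤ ∑' k : E, exp (-c * log (1 + ‖k‖) ^ ρ) := by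
  rw [← (Equiv.subLeft (a : E)).tsum_eq]
  exact (sum_coe_sort Λ _).trans_le <|
    ((Equiv.subLeft (a : E)).summable_iff.mpr hs).sum_le_tsum Λ fun k _ => (exp_pos _).le

theorem pathProd_decayKernel (c ρ : ℝ) (Λ : Finset E) {n : ℕ} (p : Fin (n + 1) → Λ) :
    (decayKernel c ρ Λ).pathProd p =
      exp (-c * ∑ j : Fin n, log (1 + ‖(p j.castSucc : E) - p j.succ‖) ^ ρ) := by
  simp only [Matrix.pathProd, decayKernel, Matrix.of_apply, ← exp_sum, mul_sum]

theorem pathProd_decayKernel_le {α ρ Cρ : ℝ} (hα : 0 ≤ α) (hρ : 0 ≤ ρ)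
    (hC : ∀ (n : ℕ) (t : Fin n → ℝ), (∀ j, 0 ≤ t j) →
      Real.log (1 + ∑ j, t j) ^ ρ ≤ (∑ j, Real.log (1 + t j) ^ ρ) + Cρ * Real.log n ^ ρ)
    (Λ : Finset E) {n : ℕ} (p : Fin (n + 1) → Λ) :
    (decayKernel α ρ Λ).pathProd p ≤ (decayKernel (α / 4) ρ Λ).pathProd p *
      exp (-(3 / 4) * α * log (1 + ‖(p 0 : E) - p (Fin.last n)‖) ^ ρ
        + (3 / 4) * α * Cρ * log n ^ ρ) := by
  have hquasi := log_one_add_norm_sub_rpow_le_sum hρ hC fun j => (p j : E)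
  rw [pathProd_decayKernel, pathProd_decayKernel, ← exp_add, exp_le_exp]
  nlinarith

theorem decayKernel_pow_succ_apply_le [DecidableEq E] {α ρ Cρ : ℝ} (hα : 0 ≤ α) (hρ : 0 ≤ ρ)
    (hC : ∀ (n : ℕ) (t : Fin n → ℝ), (∀ j, 0 ≤ t j) →
      Real.log (1 + ∑ j, t j) ^ ρ ≤ (∑ j, Real.log (1 + t j) ^ ρ) + Cρ * Real.log n ^ ρ)
    (Λ : Finset E) (n : ℕ) (x y : Λ) :
    (decayKernel α ρ Λ ^ (n + 1)) x y ≤ (decayKernel (α / 4) ρ Λ ^ (n + 1)) x y *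
      exp (-(3 / 4) * α * log (1 + ‖(x : E) - y‖) ^ ρ
        + (3 / 4) * α * Cρ * log (n + 1 : ℕ) ^ ρ) := by
  simp only [Matrix.pow_succ_apply_eq_sum_pathProd, sum_mul]
  refine sum_le_sum fun z _ => ?_
  simpa using pathProd_decayKernel_le hα hρ hC Λ (Fin.cons x (Fin.snoc z y))

end DecayKernel

theorem summable_exp_neg_two_mul_log_one_add_norm :
    Summable fun m : ℤ => exp (-2 * log (1 + ‖m‖)) := by
  have hnat : Summable fun n : ℕ => exp (-2 * log (1 + n)) := by
    refine ((summable_one_div_nat_add_rpow 1 2).mpr one_lt_two).congr fun n => ?_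
    rw [abs_of_nonneg (by positivity), rpow_def_of_pos (by positivity), add_comm]
    simp [← exp_neg, mul_comm]
  refine summable_int_iff_summable_nat_and_neg.mpr ⟨?_, ?_⟩ <;> simpa using hnat

/-- `log^ρ` beats `2 d log`, so the summand is `O((1 + ‖k‖) ^ (-2d))`, and
`(1 + ‖k‖) ^ (-2d) ≤ ∏ j, (1 + |k j|) ^ (-2)` is summable coordinatewise. -/
theorem summable_exp_neg_mul_log_one_add_norm_rpow {c ρ : ℝ} (hc : 0 < c) (hρ : 1 < ρ) (d : ℕ) :
    Summable fun k : Fin d → ℤ => exp (-c * log (1 + ‖k‖) ^ ρ) := by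
  obtain ⟨M, hM⟩ := exists_mul_sub_mul_rpow_le (a := 2 * d) (by positivity) hc hρ
  refine .of_nonneg_of_le (fun k => (exp_pos _).le) (fun k => ?_)
    ((summable_fin_pi_prod_of_nonneg (fun m => (exp_pos _).le)
      summable_exp_neg_two_mul_log_one_add_norm d).mul_left (exp M))
  have hL : 0 ≤ log (1 + ‖k‖) := log_nonneg (le_add_of_nonneg_right (norm_nonneg _))
  have hcoord : ∑ j, log (1 + ‖k j‖) ≤ d * log (1 + ‖k‖) := by
    calc ∑ j, log (1 + ‖k j‖) ≤ ∑ _j : Fin d, log (1 + ‖k‖) :=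
          sum_le_sum fun j _ => log_le_log (by positivity) (by gcongr; exact norm_le_pi_norm k j)
      _ = d * log (1 + ‖k‖) := by simp
  rw [← exp_sum, ← exp_add, exp_le_exp, ← mul_sum]
  nlinarith [hM _ hL]

/-- Bound on matrix powers of a long-range hopping matrix. -/
theorem hopping_power_bound (d : ℕ) (α ρ Cρ : ℝ) (hα : 0 < α) (hρ : 1 < ρ)
    (hC : ∀ (n : ℕ) (t : Fin n → ℝ), (∀ j, 0 ≤ t j) →
      Real.log (1 + ∑ j, t j) ^ ρ ≤ (∑ j, Real.log (1 + t j) ^ ρ) + Cρ * Real.log n ^ ρ)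
    (W : (Fin d → ℤ) → (Fin d → ℤ) → ℂ)
    (hW : ∀ x y, ‖W x y‖ ≤ Real.exp (-α * Real.log (1 + ‖x - y‖) ^ ρ))
    (Λ : Finset (Fin d → ℤ)) (i : ℕ) (hi : 2 ≤ i) (x y : Λ) :
    ‖((Matrix.of fun a b : Λ => W a b) ^ i) x y‖ ≤
      (∑' k : Fin d → ℤ, Real.exp (-(α / 4) * Real.log (1 + ‖k‖) ^ ρ)) ^ (i - 1) *
        Real.exp (-(3 / 4) * α * Real.log (1 + ‖(x : Fin d → ℤ) - (y : Fin d → ℤ)‖) ^ ρ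
          + (3 / 4) * α * Cρ * Real.log i ^ ρ) := by
  obtain ⟨n, rfl⟩ : ∃ n, i = n + 1 := ⟨i - 1, by omega⟩
  have hrow := sum_decayKernel_le_tsum Λ
    (summable_exp_neg_mul_log_one_add_norm_rpow (c := α / 4) (by positivity) hρ d)
  calc ‖((Matrix.of fun a b : Λ => W a b) ^ (n + 1)) x y‖
      ≤ (decayKernel α ρ Λ ^ (n + 1)) x y :=
        Matrix.norm_pow_succ_apply_le (N := decayKernel α ρ Λ) (fun a b => hW a b) n x y
    _ ≤ _ := decayKernel_pow_succ_apply_le hα.le (by linarith) hC Λ n x y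
    _ ≤ _ := by
      rw [Nat.add_sub_cancel]
      gcongr
      exact Matrix.pow_succ_apply_le_pow (decayKernel_nonneg _ _ _)
        (decayKernel_le_one (by positivity) _ _) hrow n x y
end
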